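/- Fix i ∈ {1,…,2m} and j ∈ {1,…,n}, suppose g_↓ ∩ L_ij ≠ ∅ and let r* be the constant value of r_↓ on g_↓ ∩ L_ij. (a) If g_↓ ∩ B_ij = ∅, then r_↓(u,v) = r* for all (u,v) ∈ g_↓ ∩ TR_ij. (b) If g_↓ ∩ B_ij = [a,b]×{j−1} is nonempty, then for every (u,j) ∈ g_↓ ∩ T_ij: r_↓(u,j) = r* if u < a; r_↓(u,j) = r_↓(u,j−1) if a ≤ u < b; r_↓(u,j) = r_↓(b,j−1) if u ≥ b; and r_↓(i,v) = r_↓(b,j−1) for every (i,v) ∈ g_↓ ∩ R_ij. -/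

import Mathlib

open Set

noncomputable section

/-- The piecewise linear closed curve through the vertices `x 0, x 1, …`:
`f(i+α) = (1-α) • x i + α • x (i+1)`. -/
def fCurve {k : ℕ} (x : ℕ → EuclideanSpace ℝ (Fin k)) (t : ℝ) :
    EuclideanSpace ℝ (Fin k) :=
  (1 - Int.fract t) • x (⌊t⌋.toNat) + Int.fract t • x (⌊t⌋.toNat + 1)

/-- The extension of the curve from `[0,m]` to `[0,2m]` by `f(u) = f(u-m)` for `u > m`. -/
def fCurveExt {k : ℕ} (m : ℕ) (x : ℕ → EuclideanSpace ℝ (Fin k)) (u : ℝ) :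
    EuclideanSpace ℝ (Fin k) :=
  if u ≤ m then fCurve x u else fCurve x (u - m)

/-- The rectangle `D = [0,2m] × [0,n]`. -/
def Dfull (m n : ℕ) : Set (ℝ × ℝ) :=
  Icc (0:ℝ) (2*(m:ℝ)) ×ˢ Icc (0:ℝ) (n:ℝ)

/-- The free space `D_ε = {(u,v) ∈ D : dist (f_X u) (f_Y v) ≤ ε}`. -/
def Dfree {k : ℕ} (m n : ℕ) (x y : ℕ → EuclideanSpace ℝ (Fin k)) (ε : ℝ) :
    Set (ℝ × ℝ) :=
  {p ∈ Dfull m n | dist (fCurveExt m x p.1) (fCurve y p.2) ≤ ε}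

/-- The top side `T = [0,2m] × {n}` of `D`. -/
def Tside (m n : ℕ) : Set (ℝ × ℝ) := Icc (0:ℝ) (2*(m:ℝ)) ×ˢ {(n:ℝ)}

/-- The bottom side `B = [0,2m] × {0}` of `D`. -/
def Bside (m : ℕ) : Set (ℝ × ℝ) := Icc (0:ℝ) (2*(m:ℝ)) ×ˢ {(0:ℝ)}

/-- A monotone (non-decreasing) path: a connected subset `γ ⊆ Dε` with
`(u-u')·(v-v') ≥ 0` for all `(u,v), (u',v') ∈ γ`. -/
def IsMonPath (Dε γ : Set (ℝ × ℝ)) : Prop :=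
  γ ⊆ Dε ∧ IsConnected γ ∧
    ∀ p ∈ γ, ∀ q ∈ γ, (p.1 - q.1) * (p.2 - q.2) ≥ 0

/-- Two points are mutually reachable if some monotone path contains both. -/
def Reach (Dε : Set (ℝ × ℝ)) (p q : ℝ × ℝ) : Prop :=
  ∃ γ : Set (ℝ × ℝ), IsMonPath Dε γ ∧ p ∈ γ ∧ q ∈ γ

/-- `g↓`: the points of `Dε` mutually reachable with at least one point of `B`. -/
def gDown (m : ℕ) (Dε : Set (ℝ × ℝ)) : Set (ℝ × ℝ) :=
  {p ∈ Dε | ∃ q ∈ Bside m, Reach Dε p q}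

/-- `g↑`: the points of `Dε` mutually reachable with at least one point of `T`. -/
def gUp (m n : ℕ) (Dε : Set (ℝ × ℝ)) : Set (ℝ × ℝ) :=
  {p ∈ Dε | ∃ q ∈ Tside m n, Reach Dε p q}

/-- The pointer `r↑(p)`: the maximum `u* ∈ [0,2m]` such that `p` and `(u*, n)`
are mutually reachable. -/
def rUp (m n : ℕ) (Dε : Set (ℝ × ℝ)) (p : ℝ × ℝ) : ℝ :=
  sSup {u : ℝ | u ∈ Icc (0:ℝ) (2*(m:ℝ)) ∧ Reach Dε p (u, (n:ℝ))}

/-- The pointer `r↓(p)`: for `p` with `p.2 > 0`, the maximum `u* ∈ [0,2m]` such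
that `p` and `(u*, 0)` are mutually reachable; on the bottom side `r↓(u,0) = u`. -/
def rDown (m : ℕ) (Dε : Set (ℝ × ℝ)) (p : ℝ × ℝ) : ℝ :=
  if p.2 = 0 then p.1
  else sSup {u : ℝ | u ∈ Icc (0:ℝ) (2*(m:ℝ)) ∧ Reach Dε p (u, (0:ℝ))}

/-- The cell `D_ij = [i-1,i] × [j-1,j]`. -/
def cellD (i j : ℕ) : Set (ℝ × ℝ) :=
  Icc ((i:ℝ)-1) (i:ℝ) ×ˢ Icc ((j:ℝ)-1) (j:ℝ)

/-- The top side `T_ij` of the cell `D_ij`. -/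
def cellT (i j : ℕ) : Set (ℝ × ℝ) := Icc ((i:ℝ)-1) (i:ℝ) ×ˢ {(j:ℝ)}

/-- The bottom side `B_ij` of the cell `D_ij`. -/
def cellB (i j : ℕ) : Set (ℝ × ℝ) := Icc ((i:ℝ)-1) (i:ℝ) ×ˢ {((j:ℝ)-1)}

/-- The right side `R_ij` of the cell `D_ij`. -/
def cellR (i j : ℕ) : Set (ℝ × ℝ) := {(i:ℝ)} ×ˢ Icc ((j:ℝ)-1) (j:ℝ)

/-- The left side `L_ij` of the cell `D_ij`. -/
def cellL (i j : ℕ) : Set (ℝ × ℝ) := {((i:ℝ)-1)} ×ˢ Icc ((j:ℝ)-1) (j:ℝ)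

/-- The partial order `≼` on `D`: `(u1,v1) ≼ (u2,v2)` iff `u1 ≤ u2` and `v1 ≥ v2`. -/
def prec (p q : ℝ × ℝ) : Prop := p.1 ≤ q.1 ∧ q.2 ≤ p.2

/-!
A monotone path from a point `p` of the cell `D_ij` down to `B` must cross the level `j - 1`. If
no point of `g↓ ∩ B_ij` lies below-left of `p`, it crosses left of the cell and so meets `L_ij`,
where `r↓ = r*`. Otherwise let `(c, j - 1)` be the rightmost such point: it is joined to `p` by a
segment, since the free space is convex inside a cell, and any path from `p` to `(w, 0)` crosses
the level `j - 1` at or left of `c`. Two monotone paths leaving one level in one order and reaching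
`B` in the opposite order must intersect (a connectedness argument along antidiagonals), so every
such path can be rerouted through `(c, j - 1)`, giving `r↓(p) = r↓(c, j - 1)`.
-/

theorem isPreconnected_of_retraction {X : Type*} [TopologicalSpace X] {s t : Set X}
    {ρ : X → X} (hs : IsPreconnected s) (hρ : Continuous ρ) (hmaps : MapsTo ρ s t)
    (hfix : ∀ a ∈ t, ρ a = a) (hts : t ⊆ s) : IsPreconnected t := by
  have himage : ρ '' s = t :=
    (image_subset_iff.2 hmaps).antisymm fun a ha => ⟨a, hts ha, hfix a ha⟩
  exact himage ▸ hs.image ρ hρ.continuousOn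

section MonotonePaths

variable {Dε γ δ : Set (ℝ × ℝ)} {p q r : ℝ × ℝ}

theorem IsMonPath.le_or_le (h : IsMonPath Dε γ) (hp : p ∈ γ) (hq : q ∈ γ) :
    p ≤ q ∨ q ≤ p := by
  have hpq := h.2.2 p hp q hq
  rcases lt_trichotomy p.1 q.1 with h1 | h1 | h1
  · exact Or.inl ⟨h1.le, by nlinarith⟩
  · rcases le_total p.2 q.2 with h2 | h2
    · exact Or.inl ⟨h1.le, h2⟩
    · exact Or.inr ⟨h1.ge, h2⟩
  · exact Or.inr ⟨h1.le, by nlinarith⟩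

theorem IsMonPath.of_subset (h : IsMonPath Dε γ) (hδγ : δ ⊆ γ) (hδ : IsConnected δ) :
    IsMonPath Dε δ :=
  ⟨hδγ.trans h.1, hδ, fun a ha b hb => h.2.2 a (hδγ ha) b (hδγ hb)⟩

-- Since `γ` is a chain, `a ↦ a ⊓ q` retracts it onto `γ ∩ Iic q`.
theorem IsMonPath.inter_Iic (h : IsMonPath Dε γ) (hq : q ∈ γ) :
    IsMonPath Dε (γ ∩ Iic q) := by
  refine h.of_subset inter_subset_left ⟨⟨q, hq, self_mem_Iic⟩, isPreconnected_of_retraction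
    h.2.1.isPreconnected (ρ := fun a => (min a.1 q.1, min a.2 q.2)) (by fun_prop) ?_
    (fun a ha => Prod.ext (min_eq_left ha.2.1) (min_eq_left ha.2.2)) inter_subset_left⟩
  intro a ha
  dsimp only
  rcases h.le_or_le ha hq with haq | hqa
  · rw [show (min a.1 q.1, min a.2 q.2) = a from
      Prod.ext (min_eq_left haq.1) (min_eq_left haq.2)]
    exact ⟨ha, haq⟩
  · rw [show (min a.1 q.1, min a.2 q.2) = q from
      Prod.ext (min_eq_right hqa.1) (min_eq_right hqa.2)]
    exact ⟨hq, self_mem_Iic⟩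

theorem IsMonPath.inter_Ici (h : IsMonPath Dε γ) (hq : q ∈ γ) :
    IsMonPath Dε (γ ∩ Ici q) := by
  refine h.of_subset inter_subset_left ⟨⟨q, hq, self_mem_Ici⟩, isPreconnected_of_retraction
    h.2.1.isPreconnected (ρ := fun a => (max a.1 q.1, max a.2 q.2)) (by fun_prop) ?_
    (fun a ha => Prod.ext (max_eq_left ha.2.1) (max_eq_left ha.2.2)) inter_subset_left⟩
  intro a ha
  dsimp only
  rcases h.le_or_le ha hq with haq | hqa
  · rw [show (max a.1 q.1, max a.2 q.2) = q from
      Prod.ext (max_eq_right haq.1) (max_eq_right haq.2)]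
    exact ⟨hq, self_mem_Ici⟩
  · rw [show (max a.1 q.1, max a.2 q.2) = a from
      Prod.ext (max_eq_left hqa.1) (max_eq_left hqa.2)]
    exact ⟨ha, hqa⟩

theorem IsMonPath.closure (hcl : IsClosed Dε) (h : IsMonPath Dε γ) :
    IsMonPath Dε (_root_.closure γ) := by
  have hclosed : IsClosed {w : (ℝ × ℝ) × (ℝ × ℝ) | 0 ≤ (w.1.1 - w.2.1) * (w.1.2 - w.2.2)} :=
    isClosed_le continuous_const (by fun_prop)
  have hprod : _root_.closure γ ×ˢ _root_.closure γ ⊆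
      {w | 0 ≤ (w.1.1 - w.2.1) * (w.1.2 - w.2.2)} := by
    rw [← closure_prod_eq]
    exact closure_minimal (fun w hw => h.2.2 w.1 hw.1 w.2 hw.2) hclosed
  exact ⟨closure_minimal h.1 hcl, h.2.1.closure, fun a ha b hb =>
    (hprod (mk_mem_prod ha hb) : 0 ≤ (a.1 - b.1) * (a.2 - b.2))⟩

theorem Reach.le_of_snd_lt (h : Reach Dε p q) (hqp : q.2 < p.2) : q ≤ p := by
  obtain ⟨γ, hγ, hp, hq⟩ := h
  have := hγ.2.2 p hp q hq
  exact ⟨by nlinarith, hqp.le⟩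

theorem Reach.exists_subset_Icc (h : Reach Dε p q) (hqp : q ≤ p) :
    ∃ γ, IsMonPath Dε γ ∧ p ∈ γ ∧ q ∈ γ ∧ γ ⊆ Icc q p := by
  obtain ⟨γ, hγ, hp, hq⟩ := h
  exact ⟨γ ∩ Iic p ∩ Ici q, (hγ.inter_Iic hp).inter_Ici ⟨hq, hqp⟩, ⟨⟨hp, self_mem_Iic⟩, hqp⟩,
    ⟨⟨hq, hqp⟩, self_mem_Ici⟩, fun a ha => ⟨ha.2, ha.1.2⟩⟩

theorem Reach.trans (hpq : Reach Dε p q) (hqr : Reach Dε q r) (hrq : r ≤ q) (hqp : q ≤ p) :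
    Reach Dε p r := by
  obtain ⟨γ, hγ, hpγ, hqγ, hγI⟩ := hpq.exists_subset_Icc hqp
  obtain ⟨δ, hδ, hqδ, hrδ, hδI⟩ := hqr.exists_subset_Icc hrq
  have hsep : ∀ a ∈ γ, ∀ b ∈ δ, b ≤ a := fun a ha b hb => (hδI hb).2.trans (hγI ha).1
  refine ⟨γ ∪ δ, ⟨union_subset hγ.1 hδ.1, IsConnected.union ⟨q, hqγ, hqδ⟩ hγ.2.1 hδ.2.1, ?_⟩,
    Or.inl hpγ, Or.inr hrδ⟩
  rintro a (ha | ha) b (hb | hb)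
  · exact hγ.2.2 a ha b hb
  · have hba := hsep a ha b hb
    exact mul_nonneg (sub_nonneg.2 hba.1) (sub_nonneg.2 hba.2)
  · have hab := hsep b hb a ha
    exact mul_nonneg_of_nonpos_of_nonpos (sub_nonpos.2 hab.1) (sub_nonpos.2 hab.2)
  · exact hδ.2.2 a ha b hb

theorem Reach.exists_apply_eq (h : Reach Dε p q) (hqp : q ≤ p) {f : ℝ × ℝ → ℝ}
    (hf : Continuous f) {c : ℝ} (hc : c ∈ Icc (f q) (f p)) :
    ∃ z, Reach Dε p z ∧ Reach Dε z q ∧ z ∈ Icc q p ∧ f z = c := by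
  obtain ⟨γ, hγ, hpγ, hqγ, hγI⟩ := h.exists_subset_Icc hqp
  obtain ⟨z, hz, rfl⟩ := hγ.2.1.isPreconnected.intermediate_value hqγ hpγ hf.continuousOn hc
  exact ⟨z, ⟨γ, hγ, hpγ, hz⟩, ⟨γ, hγ, hz, hqγ⟩, hγI hz, rfl⟩

theorem reach_of_convex {C : Set (ℝ × ℝ)} (hC : Convex ℝ C) (hCD : C ⊆ Dε) (hp : p ∈ C)
    (hq : q ∈ C) (hqp : q ≤ p) : Reach Dε p q := by
  refine ⟨segment ℝ q p, ⟨(hC.segment_subset hq hp).trans hCD,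
    (convex_segment q p).isConnected ⟨q, left_mem_segment ℝ q p⟩, ?_⟩,
    right_mem_segment ℝ q p, left_mem_segment ℝ q p⟩
  rw [segment_eq_image']
  rintro _ ⟨θ, -, rfl⟩ _ ⟨θ', -, rfl⟩
  have hprod : 0 ≤ (p.1 - q.1) * (p.2 - q.2) :=
    mul_nonneg (sub_nonneg.2 hqp.1) (sub_nonneg.2 hqp.2)
  simp only [Prod.fst_add, Prod.snd_add, Prod.smul_fst, Prod.smul_snd, Prod.fst_sub,
    Prod.snd_sub, smul_eq_mul]
  nlinarith [mul_nonneg (sq_nonneg (θ - θ')) hprod]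

end MonotonePaths

theorem injOn_fst_add_snd {δ : Set (ℝ × ℝ)}
    (hδ : ∀ p ∈ δ, ∀ q ∈ δ, 0 ≤ (p.1 - q.1) * (p.2 - q.2)) :
    InjOn (fun z : ℝ × ℝ => z.1 + z.2) δ := by
  intro p hp q hq hpq
  have h := hδ p hp q hq
  simp only at hpq
  have h2 : p.2 = q.2 := by nlinarith
  exact Prod.ext (by linarith) h2

/- Along each antidiagonal `z.1 + z.2 = c` the compact chain `δ` has exactly one point, and
`γ` splits into the closed sets of points on or to the right, resp. on or to the left, of
that point. `γ` meets both, so by preconnectedness it meets their intersection, which lies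
on `δ`. -/
theorem inter_nonempty_of_crossing {γ δ : Set (ℝ × ℝ)} (hγ : IsPreconnected γ)
    (hγc : IsCompact γ) (hδ : IsPreconnected δ) (hδc : IsCompact δ)
    (hδm : ∀ p ∈ δ, ∀ q ∈ δ, 0 ≤ (p.1 - q.1) * (p.2 - q.2))
    {P₁ Q₁ P₂ Q₂ : ℝ × ℝ} (hP₁ : P₁ ∈ γ) (hQ₁ : Q₁ ∈ γ) (hP₂ : P₂ ∈ δ) (hQ₂ : Q₂ ∈ δ)
    (hγI : γ ⊆ Icc Q₁ P₁) (hδI : δ ⊆ Icc Q₂ P₂) (htop : P₁.2 = P₂.2) (hbot : Q₁.2 = Q₂.2)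
    (hP : P₁.1 ≤ P₂.1) (hQ : Q₂.1 ≤ Q₁.1) : (γ ∩ δ).Nonempty := by
  set φ : ℝ × ℝ → ℝ := fun z => z.1 + z.2
  have hφ : Continuous φ := by fun_prop
  have hmeet : ∀ z ∈ γ, ∃ z' ∈ δ, φ z' = φ z := fun z hz =>
    hδ.intermediate_value hQ₂ hP₂ hφ.continuousOn
      ⟨by linarith [(hγI hz).1.1, (hγI hz).1.2], by linarith [(hγI hz).2.1, (hγI hz).2.2]⟩
  have hclosed : ∀ {R : Set ((ℝ × ℝ) × (ℝ × ℝ))}, IsClosed R →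
      IsClosed (Prod.fst '' (R ∩ γ ×ˢ δ)) := fun hR =>
    (((hγc.prod hδc).inter_left hR).image continuous_fst).isClosed
  set A := Prod.fst '' ({w | φ w.2 = φ w.1 ∧ w.2.1 ≤ w.1.1} ∩ γ ×ˢ δ)
  set B := Prod.fst '' ({w | φ w.2 = φ w.1 ∧ w.1.1 ≤ w.2.1} ∩ γ ×ˢ δ)
  have hA : IsClosed A := hclosed <| (isClosed_eq (hφ.comp continuous_snd)
    (hφ.comp continuous_fst)).inter (isClosed_le (continuous_fst.comp continuous_snd)
      (continuous_fst.comp continuous_fst))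
  have hB : IsClosed B := hclosed <| (isClosed_eq (hφ.comp continuous_snd)
    (hφ.comp continuous_fst)).inter (isClosed_le (continuous_fst.comp continuous_fst)
      (continuous_fst.comp continuous_snd))
  have hcover : γ ⊆ A ∪ B := by
    intro z hz
    obtain ⟨z', hz', he⟩ := hmeet z hz
    rcases le_total z'.1 z.1 with hle | hle
    · exact Or.inl ⟨(z, z'), ⟨⟨he, hle⟩, hz, hz'⟩, rfl⟩
    · exact Or.inr ⟨(z, z'), ⟨⟨he, hle⟩, hz, hz'⟩, rfl⟩
  have hQ₁A : Q₁ ∈ A := by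
    obtain ⟨z', hz', he⟩ := hmeet Q₁ hQ₁
    refine ⟨(Q₁, z'), ⟨⟨he, ?_⟩, hQ₁, hz'⟩, rfl⟩
    have : φ z' = φ Q₁ := he
    linarith [(hδI hz').1.2]
  have hP₁B : P₁ ∈ B := by
    obtain ⟨z', hz', he⟩ := hmeet P₁ hP₁
    refine ⟨(P₁, z'), ⟨⟨he, ?_⟩, hP₁, hz'⟩, rfl⟩
    have : φ z' = φ P₁ := he
    linarith [(hδI hz').2.2]
  obtain ⟨-, -, ⟨⟨a, b⟩, ⟨⟨hab, hba⟩, ha, hb⟩, rfl⟩, ⟨⟨a', b'⟩, ⟨⟨hab', hab''⟩, -, hb'⟩, haa'⟩⟩ :=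
    isPreconnected_closed_iff.1 hγ A B hA hB hcover ⟨Q₁, hQ₁, hQ₁A⟩ ⟨P₁, hP₁, hP₁B⟩
  simp only [φ] at hab hba hab' hab'' haa' ha hb hb'
  subst a'
  obtain rfl : b = b' := injOn_fst_add_snd hδm hb hb' (hab.trans hab'.symm)
  have hfst : b.1 = a.1 := le_antisymm hba hab''
  exact ⟨a, ha, Prod.ext hfst (by linarith) ▸ hb⟩

-- The two paths down to `B` cross; follow the path of `q` to the crossing, then that of `z`.
theorem reach_of_crossing {Dε : Set (ℝ × ℝ)} (hcl : IsClosed Dε)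
    (hbdd : Bornology.IsBounded Dε) {z q : ℝ × ℝ} {u w : ℝ} (hz : Reach Dε z (u, 0))
    (hq : Reach Dε q (w, 0)) (hzq : z.2 = q.2) (hq0 : 0 < q.2) (hle : z.1 ≤ q.1)
    (hwu : w ≤ u) : Reach Dε q (u, 0) := by
  obtain ⟨γ, hγ, hzγ, huγ, hγI⟩ := hz.exists_subset_Icc (hz.le_of_snd_lt (hzq ▸ hq0))
  obtain ⟨δ, hδ, hqδ, hwδ, hδI⟩ := hq.exists_subset_Icc (hq.le_of_snd_lt hq0)
  have hγ' := hγ.closure hcl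
  have hδ' := hδ.closure hcl
  have hγI' := closure_minimal hγI isClosed_Icc
  have hδI' := closure_minimal hδI isClosed_Icc
  obtain ⟨c, hcγ, hcδ⟩ := inter_nonempty_of_crossing hγ'.2.1.isPreconnected
    (hbdd.subset hγ.1).isCompact_closure hδ'.2.1.isPreconnected
    (hbdd.subset hδ.1).isCompact_closure hδ'.2.2
    (subset_closure hzγ) (subset_closure huγ) (subset_closure hqδ) (subset_closure hwδ)
    hγI' hδI' hzq rfl hle hwu
  exact Reach.trans ⟨_, hδ', subset_closure hqδ, hcδ⟩ ⟨_, hγ', hcγ, subset_closure huγ⟩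
    (hγI' hcγ).1 (hδI' hcδ).2

section Curve

variable {k : ℕ} (x : ℕ → EuclideanSpace ℝ (Fin k))

theorem fCurve_natCast (l : ℕ) : fCurve x l = x l := by
  simp [fCurve]

theorem fCurve_eqOn_lineMap (l : ℕ) :
    EqOn (fCurve x) (fun t => AffineMap.lineMap (x l) (x (l + 1)) (t - l)) (Icc l (l + 1)) := by
  intro t ht
  rcases ht.2.eq_or_lt with rfl | hlt
  · rw [show (l : ℝ) + 1 = (l + 1 : ℕ) by push_cast; rfl, fCurve_natCast]
    simp
  · have hfloor : ⌊t⌋ = l := Int.floor_eq_iff.2 ⟨mod_cast ht.1, mod_cast hlt⟩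
    simp only [fCurve, AffineMap.lineMap_apply_module, Int.fract, hfloor, Int.toNat_natCast,
      Int.cast_natCast]

theorem exists_affineMap_eqOn_fCurve (l : ℕ) :
    ∃ F : ℝ →ᵃ[ℝ] EuclideanSpace ℝ (Fin k), EqOn (fCurve x) F (Icc l (l + 1)) :=
  ⟨(AffineMap.lineMap (x l) (x (l + 1))).comp (AffineMap.id ℝ ℝ - AffineMap.const ℝ ℝ (l : ℝ)),
    fun t ht => (fCurve_eqOn_lineMap x l ht).trans (by simp)⟩

theorem continuousOn_fCurve (N : ℕ) : ContinuousOn (fCurve x) (Icc 0 N) := by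
  induction N with
  | zero => simp
  | succ N ih =>
    rw [Nat.cast_succ, ← Icc_union_Icc_eq_Icc (Nat.cast_nonneg N) (by linarith)]
    refine ih.union_of_isClosed ?_ isClosed_Icc isClosed_Icc
    exact (AffineMap.lineMap_continuous.comp (continuous_sub_right _)).continuousOn.congr
      (fCurve_eqOn_lineMap x N)

variable {m : ℕ}

theorem fCurveExt_eqOn_shift (hx : x m = x 0) :
    EqOn (fCurveExt m x) (fun u => fCurve x (u - m)) (Ici (m : ℝ)) := by
  intro u hu
  rcases (show (m : ℝ) ≤ u from hu).eq_or_lt with rfl | hlt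
  · simp only [fCurveExt, le_rfl, if_true, sub_self]
    rw [fCurve_natCast, hx, ← fCurve_natCast x 0, Nat.cast_zero]
  · simp [fCurveExt, hlt.not_ge]

theorem continuousOn_fCurveExt (hx : x m = x 0) :
    ContinuousOn (fCurveExt m x) (Icc 0 (2 * m)) := by
  have hm : (0 : ℝ) ≤ m := Nat.cast_nonneg m
  rw [← Icc_union_Icc_eq_Icc hm (by linarith)]
  refine ContinuousOn.union_of_isClosed ?_ ?_ isClosed_Icc isClosed_Icc
  · exact (continuousOn_fCurve x m).congr fun u hu => if_pos hu.2
  · refine ((continuousOn_fCurve x m).comp (continuous_sub_right _).continuousOn ?_).congr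
      fun u hu => fCurveExt_eqOn_shift x hx hu.1
    exact fun u hu => ⟨by linarith [hu.1], by linarith [hu.2]⟩

theorem exists_affineMap_eqOn_fCurveExt (hx : x m = x 0) {i : ℕ} (hi1 : 1 ≤ i) (hi2 : i ≤ 2 * m) :
    ∃ F : ℝ →ᵃ[ℝ] EuclideanSpace ℝ (Fin k), EqOn (fCurveExt m x) F (Icc (i - 1) i) := by
  obtain ⟨l, rfl⟩ : ∃ l, i = l + 1 := ⟨i - 1, by omega⟩
  push_cast
  rw [add_sub_cancel_right]
  by_cases hlm : l < m
  · obtain ⟨F, hF⟩ := exists_affineMap_eqOn_fCurve x l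
    refine ⟨F, fun u hu => ?_⟩
    rw [← hF hu, fCurveExt, if_pos (hu.2.trans (mod_cast hlm))]
  · obtain ⟨F, hF⟩ := exists_affineMap_eqOn_fCurve x (l - m)
    have hml : (m : ℝ) ≤ l := mod_cast not_lt.1 hlm
    refine ⟨F.comp (AffineMap.id ℝ ℝ - AffineMap.const ℝ ℝ (m : ℝ)), fun u hu => ?_⟩
    rw [fCurveExt_eqOn_shift x hx (hml.trans hu.1)]
    refine hF ⟨?_, ?_⟩ <;> push_cast [Nat.cast_sub (not_lt.1 hlm)] <;> linarith [hu.1, hu.2]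

end Curve

theorem convex_setOf_dist_le {E : Type*} [NormedAddCommGroup E] [NormedSpace ℝ E]
    {f g : ℝ → E} {s t : Set ℝ} {F G : ℝ →ᵃ[ℝ] E} (hs : Convex ℝ s) (ht : Convex ℝ t)
    (hF : EqOn f F s) (hG : EqOn g G t) (ε : ℝ) :
    Convex ℝ {p ∈ s ×ˢ t | dist (f p.1) (g p.2) ≤ ε} := by
  let L : ℝ × ℝ →ᵃ[ℝ] E := F.comp (AffineMap.fst) - G.comp AffineMap.snd
  have hset : {p ∈ s ×ˢ t | dist (f p.1) (g p.2) ≤ ε} = {p ∈ s ×ˢ t | ‖L p‖ ≤ ε} := by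
    ext p
    refine and_congr_right fun hp => ?_
    rw [dist_eq_norm, hF hp.1, hG hp.2]
    rfl
  rw [hset]
  exact (((convexOn_norm convex_univ).comp_affineMap L).subset (subset_univ _)
    (hs.prod ht)).convex_le ε

theorem cellD_subset_Dfull {m n i j : ℕ} (hi1 : 1 ≤ i) (hi2 : i ≤ 2 * m) (hj1 : 1 ≤ j)
    (hj2 : j ≤ n) : cellD i j ⊆ Dfull m n := by
  have hi1' : (1 : ℝ) ≤ i := mod_cast hi1
  have hi2' : (i : ℝ) ≤ 2 * m := mod_cast hi2
  have hj1' : (1 : ℝ) ≤ j := mod_cast hj1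
  have hj2' : (j : ℝ) ≤ n := mod_cast hj2
  exact prod_mono (Icc_subset_Icc (by linarith) hi2') (Icc_subset_Icc (by linarith) hj2')

section FreeSpace

variable {k m n : ℕ} {x : ℕ → EuclideanSpace ℝ (Fin k)} (y : ℕ → EuclideanSpace ℝ (Fin k))
  (ε : ℝ)

theorem isClosed_Dfree (hx : x m = x 0) : IsClosed (Dfree m n x y ε) := by
  have hcont : ContinuousOn (fun p : ℝ × ℝ => dist (fCurveExt m x p.1) (fCurve y p.2))
      (Dfull m n) :=
    continuous_dist.comp_continuousOn <| ContinuousOn.prodMk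
      ((continuousOn_fCurveExt x hx).comp continuousOn_fst fun _ hp => hp.1)
      ((continuousOn_fCurve y n).comp continuousOn_snd fun _ hp => hp.2)
  exact hcont.preimage_isClosed_of_isClosed (isClosed_Icc.prod isClosed_Icc) isClosed_Iic

theorem convex_Dfree_inter_cellD (hx : x m = x 0) {i j : ℕ} (hi1 : 1 ≤ i) (hi2 : i ≤ 2 * m)
    (hj1 : 1 ≤ j) (hj2 : j ≤ n) : Convex ℝ (Dfree m n x y ε ∩ cellD i j) := by
  obtain ⟨F, hF⟩ := exists_affineMap_eqOn_fCurveExt x hx hi1 hi2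
  obtain ⟨G, hG⟩ : ∃ G : ℝ →ᵃ[ℝ] _, EqOn (fCurve y) G (Icc ((j : ℝ) - 1) j) := by
    obtain ⟨l, rfl⟩ : ∃ l, j = l + 1 := ⟨j - 1, by omega⟩
    simpa using exists_affineMap_eqOn_fCurve y l
  have hcell := cellD_subset_Dfull (n := n) hi1 hi2 hj1 hj2
  convert convex_setOf_dist_le (convex_Icc _ _) (convex_Icc _ _) hF hG ε using 1
  ext p
  exact ⟨fun hp => ⟨hp.2, hp.1.2⟩, fun hp => ⟨⟨hcell hp.1, hp.2⟩, hp.1⟩⟩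

end FreeSpace

section Pointer

variable {m n : ℕ} {Dε : Set (ℝ × ℝ)} {p q z : ℝ × ℝ} {u w : ℝ}

theorem mem_gDown_of_reach (h : Reach Dε p (u, 0)) (hu : u ∈ Icc 0 (2 * (m : ℝ))) :
    p ∈ gDown m Dε :=
  let ⟨_, hγ, hp, _⟩ := h
  ⟨hγ.1 hp, (u, 0), ⟨hu, rfl⟩, h⟩

theorem exists_reach_of_mem_gDown (hp : p ∈ gDown m Dε) :
    ∃ u ∈ Icc 0 (2 * (m : ℝ)), Reach Dε p (u, 0) := by
  obtain ⟨-, ⟨u, v⟩, ⟨hu, rfl⟩, h⟩ := hp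
  exact ⟨u, hu, h⟩

theorem le_rDown (hp : p.2 ≠ 0) (hu : u ∈ Icc 0 (2 * (m : ℝ))) (h : Reach Dε p (u, 0)) :
    u ≤ rDown m Dε p := by
  rw [rDown, if_neg hp]
  exact le_csSup ⟨2 * m, fun _ hv => hv.1.2⟩ ⟨hu, h⟩

theorem rDown_le (hp : p.2 ≠ 0) (hg : p ∈ gDown m Dε) {M : ℝ}
    (h : ∀ u ∈ Icc 0 (2 * (m : ℝ)), Reach Dε p (u, 0) → u ≤ M) : rDown m Dε p ≤ M := by
  rw [rDown, if_neg hp]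
  obtain ⟨u, hu, hpu⟩ := exists_reach_of_mem_gDown hg
  exact csSup_le ⟨u, hu, hpu⟩ fun v hv => h v hv.1 hv.2

theorem rDown_le_rDown (hD : Dε ⊆ Dfull m n) (h : Reach Dε p q) (hqp : q ≤ p) (hp : p.2 ≠ 0)
    (hq : q ∈ gDown m Dε) : rDown m Dε q ≤ rDown m Dε p := by
  rcases (hD hq.1).2.1.eq_or_lt with hq0 | hq0
  · rw [rDown, if_pos hq0.symm]
    exact le_rDown hp (hD hq.1).1 (by rwa [show (q.1, (0 : ℝ)) = q from Prod.ext rfl hq0])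
  · refine rDown_le hq0.ne' hq fun u hu hqu => le_rDown hp hu ?_
    exact h.trans hqu (hqu.le_of_snd_lt hq0) hqp

theorem le_rDown_of_reach_left (hcl : IsClosed Dε) (hD : Dε ⊆ Dfull m n) (hq : q ∈ gDown m Dε)
    (hzq : z.2 = q.2) (hle : z.1 ≤ q.1) (hwz : w ≤ z.1) (hz : Reach Dε z (w, 0))
    (hw : w ∈ Icc 0 (2 * (m : ℝ))) : w ≤ rDown m Dε q := by
  rcases (hD hq.1).2.1.eq_or_lt with hq0 | hq0
  · rw [rDown, if_pos hq0.symm]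
    exact hwz.trans hle
  obtain ⟨w₀, hw₀, hqw₀⟩ := exists_reach_of_mem_gDown hq
  rcases le_total w w₀ with hww₀ | hw₀w
  · exact hww₀.trans (le_rDown hq0.ne' hw₀ hqw₀)
  · have hbdd : Bornology.IsBounded Dε :=
      ((Metric.isBounded_Icc _ _).prod (Metric.isBounded_Icc _ _)).subset hD
    exact le_rDown hq0.ne' hw (reach_of_crossing hcl hbdd hz hqw₀ hzq hq0 hle hw₀w)

end Pointer

theorem cellT_union_cellR_subset_cellD (i j : ℕ) : cellT i j ∪ cellR i j ⊆ cellD i j := by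
  rintro p (⟨hp1, hp2⟩ | ⟨hp1, hp2⟩)
  · exact ⟨hp1, by rw [mem_singleton_iff.1 hp2]; exact ⟨by linarith, le_rfl⟩⟩
  · exact ⟨by rw [mem_singleton_iff.1 hp1]; exact ⟨by linarith, le_rfl⟩, hp2⟩

section Cell

variable {m n i j : ℕ} {Dε : Set (ℝ × ℝ)} {p : ℝ × ℝ}

-- If no point of `g↓ ∩ B_ij` lies below-left of `p`, every path from `p` down to `B` leaves
-- the cell through its left side.
theorem rDown_eq_of_forall_not_le (hD : Dε ⊆ Dfull m n) (hj : 1 ≤ j) {r : ℝ}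
    (hconst : ∀ z ∈ gDown m Dε ∩ cellL i j, rDown m Dε z = r) (hp : p ∈ gDown m Dε)
    (hpc : p ∈ cellD i j) (hB : ∀ z ∈ gDown m Dε ∩ cellB i j, ¬z ≤ p) :
    rDown m Dε p = r := by
  have hj' : (0 : ℝ) ≤ j - 1 := by simpa using (show (1 : ℝ) ≤ j from mod_cast hj)
  have above : ∀ z ∈ gDown m Dε, z.1 ∈ Icc ((i : ℝ) - 1) i → (j : ℝ) - 1 ≤ z.2 → z ≤ p →
      (j : ℝ) - 1 < z.2 := fun z hz hz1 hz2 hzp =>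
    hz2.lt_of_ne fun h => hB z ⟨hz, hz1, h.symm⟩ hzp
  have hp2 := above p hp hpc.1 hpc.2.1 le_rfl
  have hleft : ∀ w ∈ Icc 0 (2 * (m : ℝ)), Reach Dε p (w, 0) → ∃ z ∈ gDown m Dε ∩ cellL i j,
      z.2 ≠ 0 ∧ Reach Dε p z ∧ z ≤ p ∧ Reach Dε z (w, 0) := by
    intro w hw hpw
    obtain ⟨z₁, hpz₁, hz₁w, hz₁I, hz₁2⟩ := hpw.exists_apply_eq
      (hpw.le_of_snd_lt (by simp only; linarith)) continuous_snd (c := (j : ℝ) - 1)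
      ⟨hj', hpc.2.1⟩
    have hz₁g := mem_gDown_of_reach hz₁w hw
    have hz₁1 : z₁.1 < i - 1 := lt_of_not_ge fun h =>
      (above z₁ hz₁g ⟨h, hz₁I.2.1.trans hpc.1.2⟩ hz₁2.ge hz₁I.2).ne' hz₁2
    obtain ⟨z, hpz, hzz₁, hzI, hz1⟩ := hpz₁.exists_apply_eq hz₁I.2 continuous_fst
      (c := (i : ℝ) - 1) ⟨hz₁1.le, hpc.1.1⟩
    have hzw := hzz₁.trans hz₁w hz₁I.1 hzI.1
    have hzg := mem_gDown_of_reach hzw hw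
    have hz2 := above z hzg ⟨hz1.ge, hz1 ▸ by linarith⟩ (hz₁2 ▸ hzI.1.2) hzI.2
    exact ⟨z, ⟨hzg, hz1, hz2.le, hzI.2.2.trans hpc.2.2⟩, by linarith, hpz, hzI.2, hzw⟩
  have hp0 : p.2 ≠ 0 := by linarith
  apply le_antisymm
  · refine rDown_le hp0 hp fun w hw hpw => ?_
    obtain ⟨z, hz, hz0, -, -, hzw⟩ := hleft w hw hpw
    exact hconst z hz ▸ le_rDown hz0 hw hzw
  · obtain ⟨w, hw, hpw⟩ := exists_reach_of_mem_gDown hp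
    obtain ⟨z, hz, -, hpz, hzp, -⟩ := hleft w hw hpw
    exact hconst z hz ▸ rDown_le_rDown hD hpz hzp hp0 hz.1

-- A path from `p` down to `B` crosses the level `j - 1` at or to the left of `c`, so by the
-- crossing argument it can be rerouted through `(c, j - 1)`.
theorem rDown_eq_rDown_of_forall_le (hcl : IsClosed Dε) (hD : Dε ⊆ Dfull m n) (hj : 1 ≤ j)
    (hconv : Convex ℝ (Dε ∩ cellD i j)) {c : ℝ} (hc : (c, (j : ℝ) - 1) ∈ gDown m Dε ∩ cellB i j)
    (hp : p ∈ gDown m Dε) (hpc : p ∈ cellD i j) (hcp : (c, (j : ℝ) - 1) ≤ p)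
    (hmax : ∀ z ∈ gDown m Dε ∩ cellB i j, z ≤ p → z.1 ≤ c) :
    rDown m Dε p = rDown m Dε (c, (j : ℝ) - 1) := by
  have hj' : (0 : ℝ) ≤ j - 1 := by simpa using (show (1 : ℝ) ≤ j from mod_cast hj)
  rcases hpc.2.1.eq_or_lt with hpj | hpj
  · have hpc' : p.1 ≤ c := hmax p ⟨hp, hpc.1, hpj.symm⟩ le_rfl
    rw [Prod.ext (le_antisymm hpc' hcp.1) hpj.symm]
  have hp0 : p.2 ≠ 0 := by linarith
  apply le_antisymm
  · refine rDown_le hp0 hp fun w hw hpw => ?_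
    obtain ⟨z, -, hzw, hzI, hz2⟩ := hpw.exists_apply_eq
      (hpw.le_of_snd_lt (by simp only; linarith)) continuous_snd (c := (j : ℝ) - 1)
      ⟨hj', hpc.2.1⟩
    have hzc : z.1 ≤ c := by
      rcases lt_or_ge z.1 (i - 1) with h | h
      · linarith [hc.2.1.1]
      · exact hmax z ⟨mem_gDown_of_reach hzw hw, ⟨h, hzI.2.1.trans hpc.1.2⟩, hz2⟩ hzI.2
    exact le_rDown_of_reach_left hcl hD hc.1 hz2 hzc hzI.1.1 hzw hw
  · exact rDown_le_rDown hD (reach_of_convex hconv inter_subset_left ⟨hp.1, hpc⟩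
      ⟨hc.1.1, hc.2.1, le_rfl, by linarith⟩ hcp) hcp hp0 hc.1

end Cell

theorem stmt15_general
    (k m n : ℕ)
    (x y : ℕ → EuclideanSpace ℝ (Fin k)) (hx : x m = x 0)
    (ε : ℝ)
    (Dε : Set (ℝ × ℝ)) (hDε : Dε = Dfree m n x y ε)
    (i j : ℕ) (hi1 : 1 ≤ i) (hi2 : i ≤ 2*m) (hj1 : 1 ≤ j) (hj2 : j ≤ n)
    (rstar : ℝ)
    (hconst : ∀ p ∈ gDown m Dε ∩ cellL i j, rDown m Dε p = rstar) :
    ((gDown m Dε ∩ cellB i j = ∅ →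
        ∀ p ∈ gDown m Dε ∩ (cellT i j ∪ cellR i j), rDown m Dε p = rstar) ∧
      (∀ a b : ℝ, a ≤ b →
        gDown m Dε ∩ cellB i j = Icc a b ×ˢ {((j:ℝ)-1)} →
        ((∀ u : ℝ, (u, (j:ℝ)) ∈ gDown m Dε ∩ cellT i j →
            (u < a → rDown m Dε (u, (j:ℝ)) = rstar) ∧
            (a ≤ u → u < b → rDown m Dε (u, (j:ℝ)) = rDown m Dε (u, (j:ℝ)-1)) ∧
            (b ≤ u → rDown m Dε (u, (j:ℝ)) = rDown m Dε (b, (j:ℝ)-1))) ∧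
          (∀ v : ℝ, ((i:ℝ), v) ∈ gDown m Dε ∩ cellR i j →
            rDown m Dε ((i:ℝ), v) = rDown m Dε (b, (j:ℝ)-1))))) := by
  subst hDε
  have hcl := isClosed_Dfree (n := n) y ε hx
  have hD : Dfree m n x y ε ⊆ Dfull m n := sep_subset _ _
  have hconv := convex_Dfree_inter_cellD y ε hx hi1 hi2 hj1 hj2
  have hcell := cellT_union_cellR_subset_cellD i j
  refine ⟨fun hB p hp => rDown_eq_of_forall_not_le hD hj1 hconst hp.1 (hcell hp.2)
    fun z hz => by simp [hB] at hz, fun a b hab hB => ?_⟩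
  have hmemB : ∀ c ∈ Icc a b, (c, (j : ℝ) - 1) ∈ gDown m (Dfree m n x y ε) ∩ cellB i j :=
    fun c hc => by rw [hB]; exact ⟨hc, rfl⟩
  have hbB : ∀ z ∈ gDown m (Dfree m n x y ε) ∩ cellB i j, z.1 ∈ Icc a b := fun z hz => by
    rw [hB] at hz; exact hz.1
  have hb : b ∈ Icc a b := ⟨hab, le_rfl⟩
  refine ⟨fun u hu => ⟨fun hua => ?_, fun hau hub => ?_, fun hbu => ?_⟩, fun v hv => ?_⟩
  · exact rDown_eq_of_forall_not_le hD hj1 hconst hu.1 (hcell (Or.inl hu.2))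
      fun z hz hzu => by linarith [(hbB z hz).1, hzu.1]
  · exact rDown_eq_rDown_of_forall_le hcl hD hj1 hconv (hmemB u ⟨hau, hub.le⟩) hu.1
      (hcell (Or.inl hu.2)) ⟨le_rfl, by simp⟩ fun z _ hzu => hzu.1
  · exact rDown_eq_rDown_of_forall_le hcl hD hj1 hconv (hmemB b hb) hu.1
      (hcell (Or.inl hu.2)) ⟨hbu, by simp⟩ fun z hz _ => (hbB z hz).2
  · exact rDown_eq_rDown_of_forall_le hcl hD hj1 hconv (hmemB b hb) hv.1
      (hcell (Or.inr hv.2)) ⟨(hmemB b hb).2.1.2, hv.2.2.1⟩ fun z hz _ => (hbB z hz).2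

theorem stmt15
    (k m n : ℕ) (hk : 1 ≤ k) (hm : 1 ≤ m) (hn : 1 ≤ n)
    (x y : ℕ → EuclideanSpace ℝ (Fin k)) (hx : x m = x 0) (hy : y n = y 0)
    (ε : ℝ) (hε : 0 ≤ ε)
    (Dε : Set (ℝ × ℝ)) (hDε : Dε = Dfree m n x y ε)
    (i j : ℕ) (hi1 : 1 ≤ i) (hi2 : i ≤ 2*m) (hj1 : 1 ≤ j) (hj2 : j ≤ n)
    (rstar : ℝ)
    (hL : (gDown m Dε ∩ cellL i j).Nonempty)
    (hconst : ∀ p ∈ gDown m Dε ∩ cellL i j, rDown m Dε p = rstar) :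
    ((gDown m Dε ∩ cellB i j = ∅ →
        ∀ p ∈ gDown m Dε ∩ (cellT i j ∪ cellR i j), rDown m Dε p = rstar) ∧
      (∀ a b : ℝ, a ≤ b →
        gDown m Dε ∩ cellB i j = Icc a b ×ˢ {((j:ℝ)-1)} →
        ((∀ u : ℝ, (u, (j:ℝ)) ∈ gDown m Dε ∩ cellT i j →
            (u < a → rDown m Dε (u, (j:ℝ)) = rstar) ∧
            (a ≤ u → u < b → rDown m Dε (u, (j:ℝ)) = rDown m Dε (u, (j:ℝ)-1)) ∧
            (b ≤ u → rDown m Dε (u, (j:ℝ)) = rDown m Dε (b, (j:ℝ)-1))) ∧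
          (∀ v : ℝ, ((i:ℝ), v) ∈ gDown m Dε ∩ cellR i j →
            rDown m Dε ((i:ℝ), v) = rDown m Dε (b, (j:ℝ)-1))))) :=
  stmt15_general k m n x y hx ε Dε hDε i j hi1 hi2 hj1 hj2 rstar hconst
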